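/- arXiv:2209.10575 — 3 statements merged into one kernel-verified Lean document; each statement's English description precedes it below -/
import Mathlib

section
/- Let R̂ : ℝ^p × ℝ_+^q → ℝ ∪ {+∞} be lower semicontinuous and level compact. Then the function (β,γ) ↦ L(β,γ) + R̂(β,γ) is level compact on ℝ^p × ℝ_+^q, and it attains its infimum: there exists (β*,γ*) ∈ ℝ^p × ℝ_+^q with L(β*,γ*) + R̂(β*,γ*) ≤ L(β,γ) + R̂(β,γ) for all (β,γ) ∈ ℝ^p × ℝ_+^q. -/
open Matrix Real Filter Topology Bornology
open scoped Pointwise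

noncomputable section

abbrev Vec (k : ℕ) : Type := Fin k → ℝ

/-- Euclidean norm of a vector. -/
def eNorm {ι : Type*} [Fintype ι] (x : ι → ℝ) : ℝ := Real.sqrt (∑ j, (x j) ^ 2)

/-- Squared Euclidean norm of a pair of vectors. -/
def sqnorm2 {p q : ℕ} (w : Vec p × Vec q) : ℝ :=
  (∑ j, (w.1 j) ^ 2) + ∑ j, (w.2 j) ^ 2

/-- ℓ²→ℓ² operator norm of a matrix (its largest singular value). -/
def opNorm {ι κ : Type*} [Fintype ι] [Fintype κ] (M : Matrix ι κ ℝ) : ℝ :=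
  sInf {c : ℝ | 0 ≤ c ∧ ∀ x : κ → ℝ, eNorm (M.mulVec x) ≤ c * eNorm x}

/-- Smallest eigenvalue of a symmetric matrix, via Rayleigh quotients. -/
def minEig {ι : Type*} [Fintype ι] (M : Matrix ι ι ℝ) : ℝ :=
  sInf {r : ℝ | ∃ x : ι → ℝ, eNorm x = 1 ∧ r = x ⬝ᵥ M.mulVec x}

/-- Largest eigenvalue of a symmetric matrix, via Rayleigh quotients. -/
def maxEig {ι : Type*} [Fintype ι] (M : Matrix ι ι ℝ) : ℝ :=
  sSup {r : ℝ | ∃ x : ι → ℝ, eNorm x = 1 ∧ r = x ⬝ᵥ M.mulVec x}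

/-- The log-barrier (perspective of the negative log). -/
def phiBar (μ : ℝ) {q : ℕ} (γ : Vec q) : EReal :=
  if μ = 0 then (if ∀ j, 0 ≤ γ j then (0 : EReal) else ⊤)
  else if 0 < μ then
    (if ∀ j, 0 < γ j then (((-μ) * ∑ j, Real.log (γ j / μ) : ℝ) : EReal) else ⊤)
  else ⊤

/-- The coupling function κ_η. -/
def kappaFun (η : ℝ) {p q : ℕ} (w : Vec p × Vec q) : ℝ := η / 2 * sqnorm2 w

/-- 1-coercivity: liminf of F(w)/‖w‖ as ‖w‖ → ∞ is positive. -/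
def OneCoercive {p q : ℕ} (R : Vec p × Vec q → EReal) : Prop :=
  ∃ c : ℝ, 0 < c ∧ ∃ r : ℝ, ∀ w : Vec p × Vec q,
    r ≤ Real.sqrt (sqnorm2 w) → ((c * Real.sqrt (sqnorm2 w) : ℝ) : EReal) ≤ R w

/-- Data of a linear mixed-effects model. -/
structure LMEData (m p q : ℕ) where
  n : Fin m → ℕ
  X : ∀ i, Matrix (Fin (n i)) (Fin p) ℝ
  Z : ∀ i, Matrix (Fin (n i)) (Fin q) ℝ
  y : ∀ i, Fin (n i) → ℝ
  lam : ∀ i, Matrix (Fin (n i)) (Fin (n i)) ℝ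

namespace LMEData

variable {m p q : ℕ}

/-- Ω_i(Γ) = Z_i Γ Z_iᵀ + Λ_i. -/
def Omega (D : LMEData m p q) (Γ : Matrix (Fin q) (Fin q) ℝ) (i : Fin m) :
    Matrix (Fin (D.n i)) (Fin (D.n i)) ℝ :=
  D.Z i * Γ * (D.Z i)ᵀ + D.lam i

/-- The marginal negative log-likelihood L_ML(β, Γ). -/
def LML (D : LMEData m p q) (β : Vec p) (Γ : Matrix (Fin q) (Fin q) ℝ) : ℝ :=
  ∑ i, ((1 : ℝ) / 2 * ((D.y i - D.X i *ᵥ β) ⬝ᵥ ((D.Omega Γ i)⁻¹ *ᵥ (D.y i - D.X i *ᵥ β)))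
    + (1 : ℝ) / 2 * Real.log (D.Omega Γ i).det)

/-- L(β, γ) = L_ML(β, Diag γ). -/
def L (D : LMEData m p q) (β : Vec p) (γ : Vec q) : ℝ := D.LML β (Matrix.diagonal γ)

/-- ν = max_i (1/2) μ_min(Λ_i)^{-2} σ_max(Z_i)^4. -/
def nu (D : LMEData m p q) : ℝ :=
  ⨆ i : Fin m, (1 : ℝ) / 2 * ((minEig (D.lam i)) ^ 2)⁻¹ * (opNorm (D.Z i)) ^ 4

/-- η̄ = ν m. -/
def etabar (D : LMEData m p q) : ℝ := D.nu * m

/-- L_{η,μ}((β,γ),(β̃,γ̃)) = L(β,γ) + φ_μ(γ) + κ_η(β−β̃,γ−γ̃). -/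
def Lrelax (D : LMEData m p q) (η μ : ℝ) (x w : Vec p × Vec q) : EReal :=
  ((D.L x.1 x.2 + kappaFun η (x - w) : ℝ) : EReal) + phiBar μ x.2

/-- The optimal value function u_{η,μ} (with extended-real values). -/
def uval (D : LMEData m p q) (η μ : ℝ) (w : Vec p × Vec q) : EReal :=
  ⨅ x : Vec p × Vec q, D.Lrelax η μ x w

/-- The (real-valued) optimal value function u_{η,μ}. -/
def ufun (D : LMEData m p q) (η μ : ℝ) (w : Vec p × Vec q) : ℝ := (D.uval η μ w).toReal

/-- Partial gradient ∇_β L. -/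
def gradB (D : LMEData m p q) (β : Vec p) (γ : Vec q) : Vec p :=
  fun j => fderiv ℝ (fun b => D.L b γ) β (Pi.single j 1)

/-- Partial gradient ∇_γ L. -/
def gradG (D : LMEData m p q) (β : Vec p) (γ : Vec q) : Vec q :=
  fun j => fderiv ℝ (fun g => D.L β g) γ (Pi.single j 1)

/-- The map G_{η,μ}. -/
def Gmap (D : LMEData m p q) (η μ : ℝ) (x : Vec p × Vec q × Vec q) (w : Vec p × Vec q) :
    Vec p × Vec q × Vec q :=
  (D.gradB x.1 x.2.1 + η • (x.1 - w.1),
   D.gradG x.1 x.2.1 + η • (x.2.1 - w.2) - x.2.2,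
   fun j => x.2.2 j * x.2.1 j - μ)

/-- Second-derivative block ∇²_{ββ} L. -/
def hessBB (D : LMEData m p q) (β : Vec p) (γ : Vec q) : Matrix (Fin p) (Fin p) ℝ :=
  Matrix.of fun j k => fderiv ℝ (fun b => D.gradB b γ j) β (Pi.single k 1)

/-- Second-derivative block ∇²_{γγ} L. -/
def hessGG (D : LMEData m p q) (β : Vec p) (γ : Vec q) : Matrix (Fin q) (Fin q) ℝ :=
  Matrix.of fun j k => fderiv ℝ (fun g => D.gradG β g j) γ (Pi.single k 1)

/-- Second-derivative block ∇²_{γβ} L (the p×q cross block). -/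
def hessGB (D : LMEData m p q) (β : Vec p) (γ : Vec q) : Matrix (Fin p) (Fin q) ℝ :=
  Matrix.of fun j k => fderiv ℝ (fun g => D.gradB β g j) γ (Pi.single k 1)

/-- Second-derivative block ∇²_{βγ} L (the q×p cross block). -/
def hessBG (D : LMEData m p q) (β : Vec p) (γ : Vec q) : Matrix (Fin q) (Fin p) ℝ :=
  Matrix.of fun j k => fderiv ℝ (fun b => D.gradG b γ j) β (Pi.single k 1)

end LMEData

/-- f(r, M) = (1/2)(rᵀM⁻¹r + ln det M). -/
def fRM {n : ℕ} (r : Vec n) (M : Matrix (Fin n) (Fin n) ℝ) : ℝ :=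
  (1 : ℝ) / 2 * (r ⬝ᵥ (M⁻¹ *ᵥ r) + Real.log M.det)

/-!
On the orthant every `Ω_i(Diag γ)` is positive definite, so `L` is continuous there, and it is
bounded below by `∑ i, ½ log det Λ_i`: the quadratic terms are nonnegative and
`det Λ ≤ det (Λ + P)` for `P` positive semidefinite, since `Λ + P = S (1 + S⁻¹ P S⁻¹) S` with
`S = Λ^{1/2}` and `1 + S⁻¹ P S⁻¹` has all eigenvalues `≥ 1`. Hence each sublevel set of `L + R̂` is
a closed subset of a sublevel set of `R̂`, so it is compact; a lower semicontinuous function with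
compact sublevel sets attains its infimum on the first nonempty one.
-/

theorem Matrix.PosSemidef.one_le_det_one_add {n : Type*} [Fintype n] [DecidableEq n]
    {Q : Matrix n n ℝ} (hQ : Q.PosSemidef) : 1 ≤ (1 + Q).det := by
  have hH : (1 + Q).IsHermitian := isHermitian_one.add hQ.1
  have one_le_eigenvalue : ∀ i, 1 ≤ hH.eigenvalues i := by
    intro i
    set v : n → ℝ := ⇑(hH.eigenvectorBasis i)
    have hv : v ≠ 0 := fun h => hH.eigenvectorBasis.orthonormal.ne_zero i (by
      simpa [v] using congrArg (WithLp.toLp 2) h)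
    have hQv : Q *ᵥ v = (hH.eigenvalues i - 1) • v := by
      have := hH.mulVec_eigenvectorBasis i
      rw [add_mulVec, one_mulVec] at this
      rw [sub_smul, one_smul, ← this, add_sub_cancel_left]
    have hnonneg := hQ.dotProduct_mulVec_nonneg v
    rw [hQv, star_trivial, dotProduct_smul, smul_eq_mul] at hnonneg
    have := nonneg_of_mul_nonneg_left hnonneg (dotProduct_self_star_pos_iff.mpr hv)
    linarith
  rw [hH.det_eq_prod_eigenvalues]
  simpa using Finset.one_le_prod fun i _ => one_le_eigenvalue i

open scoped MatrixOrder in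
theorem Matrix.PosDef.det_le_det_add {n : Type*} [Fintype n] [DecidableEq n]
    {A B : Matrix n n ℝ} (hA : A.PosDef) (hB : B.PosSemidef) : A.det ≤ (A + B).det := by
  set S := CFC.sqrt A
  have hS : S.IsHermitian := (CFC.sqrt_nonneg A).posSemidef.1
  have hSS : S * S = A := CFC.sqrt_mul_sqrt_self A hA.posSemidef.nonneg
  have hSunit : IsUnit S.det :=
    isUnit_of_mul_isUnit_left (by rw [← det_mul, hSS]; exact hA.det_pos.ne'.isUnit)
  have hQ : (S⁻¹ * B * S⁻¹).PosSemidef := by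
    have := hB.conjTranspose_mul_mul_same S⁻¹
    rwa [conjTranspose_nonsing_inv, hS.eq] at this
  have hfactor : A + B = S * (1 + S⁻¹ * B * S⁻¹) * S := by
    rw [mul_add, add_mul, mul_one, hSS, ← mul_assoc, ← mul_assoc, mul_nonsing_inv _ hSunit,
      one_mul, mul_assoc, nonsing_inv_mul _ hSunit, mul_one]
  calc A.det = A.det * 1 := (mul_one _).symm
    _ ≤ A.det * (1 + S⁻¹ * B * S⁻¹).det := by gcongr; exacts [hA.det_pos.le, hQ.one_le_det_one_add]
    _ = (A + B).det := by rw [hfactor, det_mul, det_mul, ← hSS, det_mul]; ring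

theorem continuousAt_fRM {n : ℕ} {r : Vec n} {M : Matrix (Fin n) (Fin n) ℝ} (hM : M.det ≠ 0) :
    ContinuousAt (fun z : Vec n × Matrix (Fin n) (Fin n) ℝ => fRM z.1 z.2) (r, M) := by
  have hinv : ContinuousAt (fun z : Vec n × Matrix (Fin n) (Fin n) ℝ => (z.1, z.2⁻¹)) (r, M) :=
    continuousAt_fst.prodMk <|
      (continuousAt_matrix_inv M (NormedRing.inverse_continuousAt (Units.mk0 _ hM))).comp
        continuousAt_snd
  have hform : Continuous fun w : Vec n × Matrix (Fin n) (Fin n) ℝ => w.1 ⬝ᵥ (w.2 *ᵥ w.1) :=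
    continuous_fst.dotProduct (continuous_snd.matrix_mulVec continuous_fst)
  have hquad : ContinuousAt (fun z : Vec n × Matrix (Fin n) (Fin n) ℝ => z.1 ⬝ᵥ (z.2⁻¹ *ᵥ z.1))
      (r, M) := hform.continuousAt.comp_of_eq hinv rfl
  have hlogdet : ContinuousAt (fun z : Vec n × Matrix (Fin n) (Fin n) ℝ => Real.log z.2.det)
      (r, M) := continuous_snd.matrix_det.continuousAt.log hM
  exact (hquad.add hlogdet).const_mul _

theorem half_log_det_le_fRM {n : ℕ} {Λ P : Matrix (Fin n) (Fin n) ℝ} (hΛ : Λ.PosDef)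
    (hP : P.PosSemidef) (r : Vec n) : 1 / 2 * Real.log Λ.det ≤ fRM r (P + Λ) := by
  have hquad : 0 ≤ r ⬝ᵥ ((P + Λ)⁻¹ *ᵥ r) := by
    simpa using (PosDef.posSemidef_add hP hΛ).inv.posSemidef.dotProduct_mulVec_nonneg r
  have hlog : Real.log Λ.det ≤ Real.log (P + Λ).det :=
    Real.log_le_log hΛ.det_pos (by simpa [add_comm] using hΛ.det_le_det_add hP)
  unfold fRM
  linarith

namespace LMEData

variable {m p q : ℕ} (D : LMEData m p q)

theorem L_eq_sum_fRM (β : Vec p) (γ : Vec q) :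
    D.L β γ = ∑ i, fRM (D.y i - D.X i *ᵥ β) (D.Omega (diagonal γ) i) := by
  simp only [L, LML, fRM, mul_add]

theorem posSemidef_Z_mul_diagonal_mul_transpose {γ : Vec q} (hγ : ∀ j, 0 ≤ γ j) (i : Fin m) :
    (D.Z i * diagonal γ * (D.Z i)ᵀ).PosSemidef := by
  simpa using (posSemidef_diagonal_iff.mpr hγ).mul_mul_conjTranspose_same (D.Z i)

theorem posDef_Omega_diagonal (hlam : ∀ i, (D.lam i).PosDef) {γ : Vec q}
    (hγ : ∀ j, 0 ≤ γ j) (i : Fin m) : (D.Omega (diagonal γ) i).PosDef :=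
  PosDef.posSemidef_add (D.posSemidef_Z_mul_diagonal_mul_transpose hγ i) (hlam i)

theorem sum_half_log_det_lam_le_L (hlam : ∀ i, (D.lam i).PosDef) (β : Vec p) {γ : Vec q}
    (hγ : ∀ j, 0 ≤ γ j) : ∑ i, 1 / 2 * Real.log (D.lam i).det ≤ D.L β γ := by
  rw [L_eq_sum_fRM]
  exact Finset.sum_le_sum fun i _ =>
    half_log_det_le_fRM (hlam i) (D.posSemidef_Z_mul_diagonal_mul_transpose hγ i) _

theorem continuousOn_L (hlam : ∀ i, (D.lam i).PosDef) :
    ContinuousOn (fun x : Vec p × Vec q => D.L x.1 x.2) {x | ∀ j, 0 ≤ x.2 j} := by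
  simp_rw [L_eq_sum_fRM]
  refine continuousOn_finsetSum _ fun i _ x hx => ?_
  have hdata : Continuous fun z : Vec p × Vec q =>
      (D.y i - D.X i *ᵥ z.1, D.Omega (diagonal z.2) i) :=
    (continuous_const.sub (continuous_const.matrix_mulVec continuous_fst)).prodMk
      (((continuous_const.matrix_mul continuous_snd.matrix_diagonal).matrix_mul
        continuous_const).add continuous_const)
  exact ((continuousAt_fRM (D.posDef_Omega_diagonal hlam hx i).det_pos.ne').comp_of_eq
    hdata.continuousAt rfl).continuousWithinAt

end LMEData

section LevelCompact

variable {α : Type*} [TopologicalSpace α] {s : Set α}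

theorem LowerSemicontinuousOn.isClosed_sep_le {β : Type*} [LinearOrder β] {f : α → β}
    (hf : LowerSemicontinuousOn f s) (hs : IsClosed s) (c : β) :
    IsClosed {x | x ∈ s ∧ f x ≤ c} := by
  obtain ⟨v, hv, hsv⟩ := lowerSemicontinuousOn_iff_preimage_Iic.mp hf c
  exact (congrArg IsClosed hsv).mpr (hs.inter hv)

theorem LowerSemicontinuousOn.coe_add {f : α → ℝ} {g : α → EReal} (hf : ContinuousOn f s)
    (hg : LowerSemicontinuousOn g s) :
    LowerSemicontinuousOn (fun x => (f x : EReal) + g x) s :=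
  (continuous_coe_real_ereal.comp_continuousOn hf).lowerSemicontinuousOn.add' hg fun _ _ =>
    EReal.continuousAt_add (Or.inl (EReal.coe_ne_top _)) (Or.inl (EReal.coe_ne_bot _))

theorem isCompact_sep_coe_add_le {f : α → ℝ} {g : α → EReal} (hs : IsClosed s)
    (hf : ContinuousOn f s) {C : ℝ} (hC : ∀ x ∈ s, C ≤ f x) (hg : LowerSemicontinuousOn g s)
    (hgc : ∀ c : ℝ, IsCompact {x | x ∈ s ∧ g x ≤ c}) (c : ℝ) :
    IsCompact {x | x ∈ s ∧ (f x : EReal) + g x ≤ c} := by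
  refine (hgc (c - C)).of_isClosed_subset ((hg.coe_add hf).isClosed_sep_le hs c) ?_
  rintro x ⟨hx, hle⟩
  refine ⟨hx, ?_⟩
  rw [EReal.coe_sub,
    EReal.le_sub_iff_add_le (.inl (EReal.coe_ne_bot C)) (.inl (EReal.coe_ne_top C)), add_comm]
  exact le_trans (by gcongr; exact_mod_cast hC x hx) hle

theorem LowerSemicontinuousOn.exists_isMinOn_of_isCompact_sep_le {f : α → EReal}
    (hs : s.Nonempty) (hf : LowerSemicontinuousOn f s)
    (hfc : ∀ c : ℝ, IsCompact {x | x ∈ s ∧ f x ≤ c}) : ∃ a ∈ s, IsMinOn f s a := by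
  by_cases hfin : ∃ x₀ ∈ s, f x₀ < ⊤
  · obtain ⟨x₀, hx₀, hx₀c⟩ := hfin
    obtain ⟨c, hc, -⟩ := EReal.exists_between_coe_real hx₀c
    obtain ⟨a, ⟨ha, -⟩, hmin⟩ := (hf.mono fun x hx => hx.1).exists_isMinOn
      (s := {x | x ∈ s ∧ f x ≤ c}) ⟨x₀, hx₀, hc.le⟩ (hfc c)
    refine ⟨a, ha, fun x hx => ?_⟩
    by_cases hxc : f x ≤ c
    · exact hmin ⟨hx, hxc⟩
    · exact (hmin ⟨hx₀, hc.le⟩).trans (hc.trans (not_le.mp hxc)).le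
  · push Not at hfin
    obtain ⟨a, ha⟩ := hs
    exact ⟨a, ha, fun x hx => by simp [top_le_iff.mp (hfin x hx)]⟩

end LevelCompact

theorem penalized_likelihood_level_compact_and_attains_general
    {m p q : ℕ}
    (D : LMEData m p q) (hlam : ∀ i, (D.lam i).PosDef)
    (Rhat : Vec p × Vec q → EReal)
    (hRlsc : LowerSemicontinuousOn Rhat {x : Vec p × Vec q | ∀ j, 0 ≤ x.2 j})
    (hRlc : ∀ c : ℝ, IsCompact {x : Vec p × Vec q | (∀ j, 0 ≤ x.2 j) ∧ Rhat x ≤ (c : EReal)}) :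
    (∀ c : ℝ, IsCompact {x : Vec p × Vec q |
        (∀ j, 0 ≤ x.2 j) ∧ (D.L x.1 x.2 : EReal) + Rhat x ≤ (c : EReal)}) ∧
    ∃ xs : Vec p × Vec q, (∀ j, 0 ≤ xs.2 j) ∧
      ∀ x : Vec p × Vec q, (∀ j, 0 ≤ x.2 j) →
        (D.L xs.1 xs.2 : EReal) + Rhat xs ≤ (D.L x.1 x.2 : EReal) + Rhat x := by
  set S : Set (Vec p × Vec q) := {x | ∀ j, 0 ≤ x.2 j}
  have hS : IsClosed S := isClosed_Ici.preimage continuous_snd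
  have hL := D.continuousOn_L hlam
  have hlc := isCompact_sep_coe_add_le hS hL
    (fun x hx => D.sum_half_log_det_lam_le_L hlam x.1 hx) hRlsc hRlc
  have hne : S.Nonempty := ⟨0, fun _ => le_rfl⟩
  obtain ⟨xs, hxs, hmin⟩ := (hRlsc.coe_add hL).exists_isMinOn_of_isCompact_sep_le hne hlc
  exact ⟨hlc, xs, hxs, fun x hx => hmin hx⟩

/-- If R̂ is lsc and level compact on ℝ^p × ℝ_+^q then L + R̂ is level
compact there and attains its infimum. -/
theorem penalized_likelihood_level_compact_and_attains
    {m p q : ℕ} (hm : 0 < m) (hp : 0 < p) (hq : 0 < q)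
    (D : LMEData m p q) (hn : ∀ i, 0 < D.n i) (hlam : ∀ i, (D.lam i).PosDef)
    (Rhat : Vec p × Vec q → EReal)
    (hRbot : ∀ x, Rhat x ≠ ⊥)
    (hRlsc : LowerSemicontinuousOn Rhat {x : Vec p × Vec q | ∀ j, 0 ≤ x.2 j})
    (hRlc : ∀ c : ℝ, IsCompact {x : Vec p × Vec q | (∀ j, 0 ≤ x.2 j) ∧ Rhat x ≤ (c : EReal)}) :
    (∀ c : ℝ, IsCompact {x : Vec p × Vec q |
        (∀ j, 0 ≤ x.2 j) ∧ (D.L x.1 x.2 : EReal) + Rhat x ≤ (c : EReal)}) ∧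
    ∃ xs : Vec p × Vec q, (∀ j, 0 ≤ xs.2 j) ∧
      ∀ x : Vec p × Vec q, (∀ j, 0 ≤ x.2 j) →
        (D.L xs.1 xs.2 : EReal) + Rhat xs ≤ (D.L x.1 x.2 : EReal) + Rhat x :=
  penalized_likelihood_level_compact_and_attains_general D hlam Rhat hRlsc hRlc
end
end

section
/- The function (β,γ) ↦ L(β,γ) + (η̄/2)‖(β,γ)‖² is convex on ℝ^p × ℝ_+^q; that is, L is η̄-weakly convex on ℝ^p × ℝ_+^q. -/
open Matrix Real Filter Topology Bornology
open scoped Pointwise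

noncomputable section

/-!
Write `L(β, γ) = ∑ᵢ fRM (yᵢ - Xᵢ β) (Ωᵢ(γ))`, both arguments being affine in `(β, γ)`.
The quadratic part `(r, Ω) ↦ rᵀ Ω⁻¹ r` is jointly convex: it is the supremum over `x` of the
affine functions `2 xᵀ r - xᵀ Ω x`. The part `log det Ωᵢ(γ)` is concave, but along a segment
`γ + t δ` its second derivative is `-tr((Ωᵢ⁻¹ Zᵢ diag(δ) Zᵢᵀ)²) ≥ -(σ_max(Zᵢ)² / μ_min(Λᵢ))² ‖δ‖²`.
Hence the `i`-th summand is `νᵢ`-weakly convex with `νᵢ ≤ ν`, and `L` is `m ν = η̄`-weakly convex.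
-/

open Set

lemma convexOn_sum_log_one_add_mul_add_sq {ι : Type*} [Fintype ι] {s : ι → ℝ} {K : ℝ}
    (hpos : ∀ t ∈ Icc (0 : ℝ) 1, ∀ k, 0 < 1 + t * s k)
    (hK : ∀ t ∈ Icc (0 : ℝ) 1, ∑ k, (s k / (1 + t * s k)) ^ 2 ≤ K) :
    ConvexOn ℝ (Icc 0 1) fun t => ∑ k, Real.log (1 + t * s k) + K / 2 * t ^ 2 := by
  have hlin : ∀ k t, HasDerivAt (fun u => 1 + u * s k) (s k) t := fun k t => by
    simpa using ((hasDerivAt_id t).mul_const (s k)).const_add 1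
  refine convexOn_of_hasDerivWithinAt2_nonneg (convex_Icc 0 1)
    (f' := fun t => ∑ k, s k / (1 + t * s k) + K * t)
    (f'' := fun t => K - ∑ k, (s k / (1 + t * s k)) ^ 2) ?_ ?_ ?_ ?_
  · refine ContinuousOn.add (continuousOn_finsetSum _ fun k _ => ?_) (by fun_prop)
    exact ContinuousOn.log (by fun_prop) fun t ht => (hpos t ht k).ne'
  all_goals
    intro t ht
    rw [interior_Icc] at ht
    have hpos' := hpos t (Ioo_subset_Icc_self ht)
  · refine HasDerivAt.hasDerivWithinAt ?_
    refine (HasDerivAt.fun_sum fun k _ => ((hlin k t).log (hpos' k).ne')).add ?_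
    exact ((hasDerivAt_pow 2 t).const_mul (K / 2)).congr_deriv (by norm_num; ring)
  · refine HasDerivAt.hasDerivWithinAt ?_
    have hk : ∀ k, HasDerivAt (fun u => s k / (1 + u * s k)) (-(s k / (1 + t * s k)) ^ 2) t :=
      fun k => ((hasDerivAt_const t (s k)).div (hlin k t) (hpos' k).ne').congr_deriv
        (by field_simp; ring)
    convert (HasDerivAt.fun_sum (u := Finset.univ) fun k _ => hk k).fun_add
      ((hasDerivAt_id' t).const_mul K) using 1
    rw [Finset.sum_neg_distrib]
    ring
  · exact sub_nonneg.mpr (hK t (Ioo_subset_Icc_self ht))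

lemma sum_log_one_add_mul_le {ι : Type*} [Fintype ι] {s : ι → ℝ} {K : ℝ}
    (hpos : ∀ t ∈ Icc (0 : ℝ) 1, ∀ k, 0 < 1 + t * s k)
    (hK : ∀ t ∈ Icc (0 : ℝ) 1, ∑ k, (s k / (1 + t * s k)) ^ 2 ≤ K)
    {a b : ℝ} (ha : 0 ≤ a) (hb : 0 ≤ b) (hab : a + b = 1) :
    ∑ k, Real.log (1 + b * s k) ≤ b * ∑ k, Real.log (1 + s k) + K / 2 * (a * b) := by
  have h := (convexOn_sum_log_one_add_mul_add_sq hpos hK).2 (left_mem_Icc.mpr zero_le_one)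
    (right_mem_Icc.mpr zero_le_one) ha hb hab
  norm_num at h
  have ha' : a = 1 - b := by linarith
  subst ha'
  nlinarith

namespace Matrix

lemma PosDef.transpose_eq {n : Type*} {M : Matrix n n ℝ} (hM : M.PosDef) : Mᵀ = M :=
  (isHermitian_iff_isSymm.mp hM.isHermitian).eq

variable {n : Type*} [Fintype n]

lemma dotProduct_mulVec_comm_of_transpose_eq {M : Matrix n n ℝ} (hM : Mᵀ = M) (u v : n → ℝ) :
    u ⬝ᵥ M *ᵥ v = v ⬝ᵥ M *ᵥ u := by
  rw [dotProduct_mulVec, ← vecMul_transpose, hM, dotProduct_comm]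

lemma sq_dotProduct_mulVec_le {M : Matrix n n ℝ} (hsymm : Mᵀ = M)
    (hpsd : ∀ z, 0 ≤ z ⬝ᵥ M *ᵥ z) (u v : n → ℝ) :
    (u ⬝ᵥ M *ᵥ v) ^ 2 ≤ (u ⬝ᵥ M *ᵥ u) * (v ⬝ᵥ M *ᵥ v) := by
  have hquad : ∀ t : ℝ,
      0 ≤ (v ⬝ᵥ M *ᵥ v) * (t * t) + (2 * (u ⬝ᵥ M *ᵥ v)) * t + u ⬝ᵥ M *ᵥ u := by
    intro t
    have h := hpsd (u + t • v)
    simp only [mulVec_add, mulVec_smul, dotProduct_add, add_dotProduct, smul_dotProduct,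
      dotProduct_smul, smul_eq_mul, dotProduct_mulVec_comm_of_transpose_eq hsymm v u] at h
    linarith
  have h := discrim_le_zero hquad
  rw [discrim] at h
  nlinarith

variable [DecidableEq n]

lemma PosDef.mulVec_inv_mulVec {M : Matrix n n ℝ} (hM : M.PosDef) (r : n → ℝ) :
    M *ᵥ (M⁻¹ *ᵥ r) = r := by
  rw [mulVec_mulVec, mul_nonsing_inv _ (isUnit_iff_ne_zero.mpr hM.det_pos.ne'), one_mulVec]

lemma PosDef.two_mul_dotProduct_sub_le {M : Matrix n n ℝ} (hM : M.PosDef) (x r : n → ℝ) :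
    2 * (x ⬝ᵥ r) - x ⬝ᵥ M *ᵥ x ≤ r ⬝ᵥ M⁻¹ *ᵥ r := by
  set w := M⁻¹ *ᵥ r
  have hMw : M *ᵥ w = r := hM.mulVec_inv_mulVec r
  have h := hM.posSemidef.dotProduct_mulVec_nonneg (x - w)
  simp only [star_trivial, mulVec_sub, dotProduct_sub, sub_dotProduct, hMw,
    dotProduct_mulVec_comm_of_transpose_eq hM.transpose_eq w x] at h
  have hw : r ⬝ᵥ w = w ⬝ᵥ r := dotProduct_comm _ _
  linarith

lemma PosDef.inv_quadForm_convexComb_le {A B : Matrix n n ℝ} (hA : A.PosDef) (hB : B.PosDef)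
    {a b : ℝ} (ha : 0 ≤ a) (hb : 0 ≤ b) (hab : a + b = 1) (r₁ r₂ : n → ℝ) :
    (a • r₁ + b • r₂) ⬝ᵥ (a • A + b • B)⁻¹ *ᵥ (a • r₁ + b • r₂)
      ≤ a * (r₁ ⬝ᵥ A⁻¹ *ᵥ r₁) + b * (r₂ ⬝ᵥ B⁻¹ *ᵥ r₂) := by
  set M := a • A + b • B
  set r := a • r₁ + b • r₂
  have hM : M.PosDef := by
    rcases ha.eq_or_lt with rfl | ha'
    · simpa [M, show b = 1 by linarith] using hB
    · exact (hA.smul ha').add_posSemidef (hB.posSemidef.smul hb)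
  set x := M⁻¹ *ᵥ r
  -- `rᵀM⁻¹r = 2xᵀr − xᵀMx` at `x = M⁻¹r`, and the right side is affine in `(r, M)`.
  have hsplit : r ⬝ᵥ M⁻¹ *ᵥ r
      = a * (2 * (x ⬝ᵥ r₁) - x ⬝ᵥ A *ᵥ x) + b * (2 * (x ⬝ᵥ r₂) - x ⬝ᵥ B *ᵥ x) := by
    have e : x ⬝ᵥ M *ᵥ x = x ⬝ᵥ r := by rw [hM.mulVec_inv_mulVec]
    have e' : r ⬝ᵥ M⁻¹ *ᵥ r = 2 * (x ⬝ᵥ r) - x ⬝ᵥ M *ᵥ x := by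
      rw [e, dotProduct_comm r]; ring
    rw [e']
    simp only [M, r, dotProduct_add, dotProduct_smul, add_mulVec, smul_mulVec, smul_eq_mul]
    ring
  rw [hsplit]
  have h₁ := mul_le_mul_of_nonneg_left (hA.two_mul_dotProduct_sub_le x r₁) ha
  have h₂ := mul_le_mul_of_nonneg_left (hB.two_mul_dotProduct_sub_le x r₂) hb
  linarith

lemma PosDef.inv_quadForm_le {M : Matrix n n ℝ} (hM : M.PosDef) {μ : ℝ}
    (hμ : 0 < μ) (hM_ge : ∀ x, μ * ∑ j, x j ^ 2 ≤ x ⬝ᵥ M *ᵥ x) (z : n → ℝ) :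
    z ⬝ᵥ M⁻¹ *ᵥ z ≤ μ⁻¹ * ∑ j, z j ^ 2 := by
  set y := M⁻¹ *ᵥ z
  have hy : μ * ∑ j, y j ^ 2 ≤ y ⬝ᵥ z := by
    have h := hM_ge y
    rwa [show M *ᵥ y = z from hM.mulVec_inv_mulVec z] at h
  -- AM-GM: `2 yᵀz ≤ μ ‖y‖² + μ⁻¹ ‖z‖²`
  have hamgm : 0 ≤ ∑ j, (μ * y j - z j) ^ 2 := by positivity
  simp only [sub_sq, mul_pow, Finset.sum_add_distrib, Finset.sum_sub_distrib,
    ← Finset.mul_sum] at hamgm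
  have hyz : ∑ j, 2 * (μ * y j) * z j = 2 * μ * (y ⬝ᵥ z) := by
    simp only [dotProduct, Finset.mul_sum]; ring_nf
  rw [hyz] at hamgm
  rw [dotProduct_comm, ← mul_le_mul_iff_of_pos_left hμ, ← mul_assoc, mul_inv_cancel₀ hμ.ne',
    one_mul]
  nlinarith

lemma sum_sq_row_le_of_quadForm_le {P : Matrix n n ℝ} (hsymm : Pᵀ = P)
    (hnonneg : ∀ x, 0 ≤ x ⬝ᵥ P *ᵥ x) {c : ℝ} (hc : 0 ≤ c)
    (hle : ∀ x, x ⬝ᵥ P *ᵥ x ≤ c * ∑ j, x j ^ 2) (j : n) :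
    ∑ k, P j k ^ 2 ≤ c ^ 2 := by
  set e : n → ℝ := Pi.single j 1
  set w := P *ᵥ e
  have hw : ∀ k, w k = P j k := fun k => by
    simp only [mulVec_single, MulOpposite.op_one, one_smul, col_apply, w, e]
    rw [← transpose_apply P j k, hsymm]
  have hww : w ⬝ᵥ w = ∑ k, P j k ^ 2 := by simp only [dotProduct, hw, sq]
  have hew : e ⬝ᵥ P *ᵥ w = w ⬝ᵥ w := by
    rw [dotProduct_mulVec_comm_of_transpose_eq hsymm]
  have hee : e ⬝ᵥ P *ᵥ e ≤ c := by simpa [e, Pi.single_apply] using hle e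
  have hwPw : w ⬝ᵥ P *ᵥ w ≤ c * (w ⬝ᵥ w) := by simpa [dotProduct, sq] using hle w
  -- Cauchy–Schwarz for `P` at `e` and `w = P e`: `‖w‖⁴ ≤ (eᵀPe) (wᵀPw) ≤ c² ‖w‖²`
  have hcs := sq_dotProduct_mulVec_le hsymm hnonneg e w
  rw [hew] at hcs
  have h : (w ⬝ᵥ w) ^ 2 ≤ c ^ 2 * (w ⬝ᵥ w) := by
    nlinarith [mul_le_mul hee hwPw (hnonneg w) hc]
  rw [← hww]
  nlinarith [dotProduct_self_star_nonneg w]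

lemma trace_sq_mul_diagonal_le {P : Matrix n n ℝ} (hsymm : Pᵀ = P) {C : ℝ}
    (hrow : ∀ j, ∑ k, P j k ^ 2 ≤ C) (δ : n → ℝ) :
    trace (P * diagonal δ * (P * diagonal δ)) ≤ C * ∑ j, δ j ^ 2 := by
  have hP : ∀ j k, P k j = P j k := fun j k => by rw [← transpose_apply P j k, hsymm]
  have htr : trace (P * diagonal δ * (P * diagonal δ)) = ∑ j, ∑ k, δ j * δ k * P j k ^ 2 := by
    simp only [trace, diag_apply, mul_apply (M := P * diagonal δ), mul_diagonal, hP]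
    exact Finset.sum_congr rfl fun j _ => Finset.sum_congr rfl fun k _ => by ring
  have hswap : ∑ j, ∑ k, δ k ^ 2 * P j k ^ 2 = ∑ j, ∑ k, δ j ^ 2 * P j k ^ 2 := by
    rw [Finset.sum_comm]; simp only [hP]
  calc trace (P * diagonal δ * (P * diagonal δ))
      ≤ ∑ j, ∑ k, (δ j ^ 2 * P j k ^ 2 + δ k ^ 2 * P j k ^ 2) / 2 := by
        rw [htr]
        gcongr with j _ k _
        nlinarith [sq_nonneg (δ j - δ k), sq_nonneg (P j k)]
    _ = ∑ j, δ j ^ 2 * ∑ k, P j k ^ 2 := by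
        simp only [add_div, Finset.sum_add_distrib, ← Finset.sum_div, hswap, Finset.mul_sum]
        ring
    _ ≤ ∑ j, δ j ^ 2 * C := by gcongr with j _; exact hrow j
    _ = C * ∑ j, δ j ^ 2 := by rw [← Finset.sum_mul, mul_comm]

/-- With `P = ZᵀΩ⁻¹Z` the trace is `δᵀ (P ∘ P) δ`, and the rows of `P` have Euclidean norm at
most `σ²/μ`. -/
lemma PosDef.trace_sq_inv_mul_le {m : Type*} [Fintype m] [DecidableEq m]
    {Ω : Matrix m m ℝ} (hΩ : Ω.PosDef) {μ : ℝ} (hμ : 0 < μ)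
    (hΩ_ge : ∀ x, μ * ∑ i, x i ^ 2 ≤ x ⬝ᵥ Ω *ᵥ x) {Z : Matrix m n ℝ} {σ : ℝ}
    (hZ : ∀ x, ∑ i, (Z *ᵥ x) i ^ 2 ≤ σ ^ 2 * ∑ j, x j ^ 2) (δ : n → ℝ) :
    trace (Ω⁻¹ * (Z * diagonal δ * Zᵀ) * (Ω⁻¹ * (Z * diagonal δ * Zᵀ)))
      ≤ (σ ^ 2 / μ) ^ 2 * ∑ j, δ j ^ 2 := by
  set P := Zᵀ * Ω⁻¹ * Z
  have htr : trace (Ω⁻¹ * (Z * diagonal δ * Zᵀ) * (Ω⁻¹ * (Z * diagonal δ * Zᵀ)))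
      = trace (P * diagonal δ * (P * diagonal δ)) := by
    rw [show Ω⁻¹ * (Z * diagonal δ * Zᵀ) * (Ω⁻¹ * (Z * diagonal δ * Zᵀ))
        = Ω⁻¹ * Z * diagonal δ * (P * diagonal δ * Zᵀ) by simp only [P, Matrix.mul_assoc],
      trace_mul_comm]
    simp only [P, Matrix.mul_assoc]
  have hsymm : Pᵀ = P := by
    simp only [P, transpose_mul, transpose_transpose, transpose_nonsing_inv, hΩ.transpose_eq,
      Matrix.mul_assoc]
  have hquad : ∀ x, x ⬝ᵥ P *ᵥ x = (Z *ᵥ x) ⬝ᵥ Ω⁻¹ *ᵥ (Z *ᵥ x) := fun x => by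
    rw [← mulVec_mulVec, ← mulVec_mulVec, dotProduct_mulVec x Zᵀ, vecMul_transpose]
  have hnonneg : ∀ x, 0 ≤ x ⬝ᵥ P *ᵥ x := fun x => by
    simpa [hquad] using hΩ.inv.posSemidef.dotProduct_mulVec_nonneg (Z *ᵥ x)
  have hle : ∀ x, x ⬝ᵥ P *ᵥ x ≤ σ ^ 2 / μ * ∑ j, x j ^ 2 := fun x => by
    rw [hquad, div_eq_inv_mul, mul_assoc]
    exact (hΩ.inv_quadForm_le hμ hΩ_ge _).trans
      (mul_le_mul_of_nonneg_left (hZ x) (inv_nonneg.mpr hμ.le))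
  rw [htr]
  exact trace_sq_mul_diagonal_le hsymm
    (sum_sq_row_le_of_quadForm_le hsymm hnonneg (by positivity) hle) δ

lemma IsHermitian.exists_orthogonal_diagonalization {S : Matrix n n ℝ} (hS : S.IsHermitian) :
    ∃ U : Matrix n n ℝ, Uᵀ * U = 1 ∧ U * Uᵀ = 1 ∧ S = U * diagonal hS.eigenvalues * Uᵀ := by
  have hstar : star (hS.eigenvectorUnitary : Matrix n n ℝ) = (hS.eigenvectorUnitary)ᵀ := by
    rw [star_eq_conjTranspose, conjTranspose_eq_transpose_of_trivial]
  refine ⟨hS.eigenvectorUnitary, ?_, ?_, ?_⟩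
  · rw [← hstar]; exact mem_unitaryGroup_iff'.mp hS.eigenvectorUnitary.2
  · rw [← hstar]; exact mem_unitaryGroup_iff.mp hS.eigenvectorUnitary.2
  · conv_lhs => rw [hS.spectral_theorem]
    simp [Unitary.conjStarAlgAut_apply, hstar]

lemma PosDef.exists_simultaneous_diagonalization {A Δ : Matrix n n ℝ} (hA : A.PosDef)
    (hΔ : Δᵀ = Δ) :
    ∃ (V : Matrix n n ℝ) (s : n → ℝ), IsUnit V ∧ A = Vᵀ * V ∧ Δ = Vᵀ * diagonal s * V := by
  obtain ⟨U, hUU, hUU', hAU⟩ := hA.isHermitian.exists_orthogonal_diagonalization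
  set d : n → ℝ := fun k => √(hA.isHermitian.eigenvalues k)
  have hd : ∀ k, 0 < d k := fun k => Real.sqrt_pos.mpr (hA.eigenvalues_pos k)
  -- whiten `A` by `R = diag(√λ) Uᵀ`, then diagonalise `R⁻ᵀ Δ R⁻¹` orthogonally
  set R := diagonal d * Uᵀ
  set R' := U * diagonal d⁻¹
  have hdd : diagonal d * diagonal d⁻¹ = 1 := by
    rw [diagonal_mul_diagonal, ← diagonal_one]
    exact congrArg diagonal (funext fun k => mul_inv_cancel₀ (hd k).ne')
  have hRR' : R * R' = 1 := by
    simp only [R, R', Matrix.mul_assoc, ← Matrix.mul_assoc Uᵀ, hUU, Matrix.one_mul, hdd]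
  have hR'R : R' * R = 1 := by
    rw [mul_eq_one_comm]; exact hRR'
  have hA' : A = Rᵀ * R := by
    have hd_sq : diagonal d * diagonal d = diagonal hA.isHermitian.eigenvalues := by
      rw [diagonal_mul_diagonal]
      exact congrArg diagonal
        (funext fun k => Real.mul_self_sqrt (hA.eigenvalues_pos k).le)
    simp only [R, transpose_mul, transpose_transpose, diagonal_transpose, Matrix.mul_assoc,
      ← Matrix.mul_assoc (diagonal d), hd_sq]
    exact hAU.trans (Matrix.mul_assoc _ _ _)
  clear_value R R'
  have hsymm : (R'ᵀ * Δ * R').IsHermitian := by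
    rw [IsHermitian, conjTranspose_eq_transpose_of_trivial, transpose_mul, transpose_mul, hΔ,
      transpose_transpose, Matrix.mul_assoc]
  obtain ⟨Q, hQQ, hQQ', hQ⟩ := IsHermitian.exists_orthogonal_diagonalization hsymm
  refine ⟨Qᵀ * R, hsymm.eigenvalues, IsUnit.of_mul_eq_one (R' * Q) ?_, ?_, ?_⟩
  · simp only [Matrix.mul_assoc, ← Matrix.mul_assoc R, hRR', Matrix.one_mul, hQQ]
  · simp only [transpose_mul, transpose_transpose, Matrix.mul_assoc, ← Matrix.mul_assoc Q,
      hQQ', Matrix.one_mul, hA']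
  · have : Rᵀ * (R'ᵀ * Δ * R') * R = Δ := by
      simp only [Matrix.mul_assoc, ← Matrix.mul_assoc Rᵀ, ← transpose_mul, hR'R, transpose_one,
        Matrix.one_mul, Matrix.mul_one]
    conv_lhs => rw [← this, hQ]
    simp only [transpose_mul, transpose_transpose, Matrix.mul_assoc]

lemma det_transpose_mul_diagonal_mul (V : Matrix n n ℝ) (d : n → ℝ) :
    (Vᵀ * diagonal d * V).det = (Vᵀ * V).det * ∏ k, d k := by
  simp only [det_mul, det_diagonal]; ring

lemma pos_of_posDef_transpose_mul_diagonal_mul {V : Matrix n n ℝ} (hV : IsUnit V) {d : n → ℝ}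
    (h : (Vᵀ * diagonal d * V).PosDef) (k : n) : 0 < d k := by
  rw [← conjTranspose_eq_transpose_of_trivial, ← star_eq_conjTranspose,
    IsUnit.posDef_star_left_conjugate_iff hV, posDef_diagonal_iff] at h
  exact h k

lemma trace_sq_inv_transpose_mul_diagonal_mul {V : Matrix n n ℝ} (hV : IsUnit V) {d : n → ℝ}
    (hd : ∀ k, d k ≠ 0) (s : n → ℝ) :
    trace ((Vᵀ * diagonal d * V)⁻¹ * (Vᵀ * diagonal s * V) *
      ((Vᵀ * diagonal d * V)⁻¹ * (Vᵀ * diagonal s * V))) = ∑ k, (s k / d k) ^ 2 := by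
  have hVdet : IsUnit V.det := (isUnit_iff_isUnit_det V).mp hV
  have hP : IsUnit (Vᵀ * diagonal d * V).det := by
    simp [det_mul, det_diagonal, hVdet.ne_zero, Finset.prod_ne_zero_iff, hd]
  have hVV : V * V⁻¹ = 1 := mul_nonsing_inv V hVdet
  set E := diagonal fun k => s k / d k
  have hdE : diagonal d * E = diagonal s := by
    rw [diagonal_mul_diagonal]
    exact congrArg diagonal (funext fun k => mul_div_cancel₀ (s k) (hd k))
  have hsim : (Vᵀ * diagonal d * V)⁻¹ * (Vᵀ * diagonal s * V) = V⁻¹ * E * V := by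
    have : Vᵀ * diagonal s * V = Vᵀ * diagonal d * V * (V⁻¹ * E * V) := by
      simp only [Matrix.mul_assoc, ← Matrix.mul_assoc V, hVV, Matrix.one_mul,
        ← Matrix.mul_assoc (diagonal d), hdE]
    rw [this, nonsing_inv_mul_cancel_left _ _ hP]
  rw [hsim, show V⁻¹ * E * V * (V⁻¹ * E * V) = V⁻¹ * (E * E * V) by
    simp only [Matrix.mul_assoc, ← Matrix.mul_assoc V, hVV, Matrix.one_mul],
    trace_mul_comm, Matrix.mul_assoc, hVV, Matrix.mul_one, diagonal_mul_diagonal, trace_diagonal]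
  simp only [sq]

/-- `tr((M⁻¹ (B - A))²)` is minus the second derivative of `t ↦ log det (A + t (B - A))`, which
becomes `log det A + ∑ₖ log (1 + t sₖ)` once `A` and `B - A` are diagonalised simultaneously. -/
lemma log_det_convexComb_le {A B : Matrix n n ℝ} {K : ℝ}
    (hpd : ∀ t ∈ Icc (0 : ℝ) 1, (A + t • (B - A)).PosDef)
    (htr : ∀ t ∈ Icc (0 : ℝ) 1,
      trace ((A + t • (B - A))⁻¹ * (B - A) * ((A + t • (B - A))⁻¹ * (B - A))) ≤ K)
    {a b : ℝ} (ha : 0 ≤ a) (hb : 0 ≤ b) (hab : a + b = 1) :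
    Real.log (a • A + b • B).det ≤ a * Real.log A.det + b * Real.log B.det + K / 2 * (a * b) := by
  have h0 : (0 : ℝ) ∈ Icc (0 : ℝ) 1 := left_mem_Icc.mpr zero_le_one
  have h1 : (1 : ℝ) ∈ Icc (0 : ℝ) 1 := right_mem_Icc.mpr zero_le_one
  have hA : A.PosDef := by simpa using hpd 0 h0
  have hB : B.PosDef := by simpa using hpd 1 h1
  obtain ⟨V, s, hV, hAV, hΔV⟩ := hA.exists_simultaneous_diagonalization (Δ := B - A)
    (by rw [transpose_sub, hA.transpose_eq, hB.transpose_eq])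
  have hpencil : ∀ t : ℝ, A + t • (B - A) = Vᵀ * diagonal (fun k => 1 + t * s k) * V := by
    intro t
    have hdiag : diagonal (fun k => 1 + t * s k) = 1 + t • diagonal s := by
      rw [← diagonal_one, ← diagonal_smul, diagonal_add]; rfl
    rw [hΔV, hAV, hdiag, Matrix.mul_add, Matrix.add_mul, Matrix.mul_one,
      Matrix.mul_smul, Matrix.smul_mul]
  have hpos : ∀ t ∈ Icc (0 : ℝ) 1, ∀ k, 0 < 1 + t * s k := fun t ht =>
    pos_of_posDef_transpose_mul_diagonal_mul hV (hpencil t ▸ hpd t ht)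
  have hlog : ∀ t ∈ Icc (0 : ℝ) 1,
      Real.log (A + t • (B - A)).det = Real.log A.det + ∑ k, Real.log (1 + t * s k) := by
    intro t ht
    have hne : ∀ k ∈ Finset.univ, 1 + t * s k ≠ 0 := fun k _ => (hpos t ht k).ne'
    rw [hpencil, det_transpose_mul_diagonal_mul, ← hAV,
      Real.log_mul hA.det_pos.ne' (Finset.prod_ne_zero_iff.mpr hne), Real.log_prod hne]
  have hK : ∀ t ∈ Icc (0 : ℝ) 1, ∑ k, (s k / (1 + t * s k)) ^ 2 ≤ K := by
    intro t ht
    have h := htr t ht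
    rwa [hpencil, hΔV, trace_sq_inv_transpose_mul_diagonal_mul hV
      (fun k => (hpos t ht k).ne')] at h
  have hcomb : a • A + b • B = A + b • (B - A) := by
    rw [show a = 1 - b by linarith, sub_smul, one_smul, smul_sub]; abel
  have hlogB := hlog 1 h1
  simp only [one_smul, add_sub_cancel, one_mul] at hlogB
  rw [hcomb, hlog b ⟨hb, by linarith⟩, hlogB]
  linear_combination sum_log_one_add_mul_le hpos hK ha hb hab - Real.log A.det * hab

end Matrix

lemma fRM_convexComb_le {k : ℕ} {A B : Matrix (Fin k) (Fin k) ℝ} {K : ℝ}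
    (hpd : ∀ t ∈ Icc (0 : ℝ) 1, (A + t • (B - A)).PosDef)
    (htr : ∀ t ∈ Icc (0 : ℝ) 1,
      trace ((A + t • (B - A))⁻¹ * (B - A) * ((A + t • (B - A))⁻¹ * (B - A))) ≤ K)
    (r₁ r₂ : Vec k) {a b : ℝ} (ha : 0 ≤ a) (hb : 0 ≤ b) (hab : a + b = 1) :
    fRM (a • r₁ + b • r₂) (a • A + b • B) ≤ a * fRM r₁ A + b * fRM r₂ B + K / 4 * (a * b) := by
  have hA : A.PosDef := by simpa using hpd 0 (left_mem_Icc.mpr zero_le_one)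
  have hB : B.PosDef := by simpa using hpd 1 (right_mem_Icc.mpr zero_le_one)
  have hquad := hA.inv_quadForm_convexComb_le hB ha hb hab r₁ r₂
  have hlog := log_det_convexComb_le hpd htr ha hb hab
  simp only [fRM]
  linarith

section RayleighBounds

variable {ι κ : Type*} [Fintype ι] [Fintype κ]

lemma eNorm_nonneg (x : ι → ℝ) : 0 ≤ eNorm x := Real.sqrt_nonneg _

lemma eNorm_sq (x : ι → ℝ) : eNorm x ^ 2 = ∑ j, x j ^ 2 := Real.sq_sqrt (by positivity)

lemma eNorm_single [DecidableEq ι] (i : ι) : eNorm (Pi.single i (1 : ℝ)) = 1 := by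
  simp [eNorm, Pi.single_apply]

lemma Matrix.PosDef.exists_pos_mul_sum_sq_le [DecidableEq ι] [Nonempty ι] {Λ : Matrix ι ι ℝ}
    (hΛ : Λ.PosDef) : ∃ c > 0, ∀ x, c * ∑ j, x j ^ 2 ≤ x ⬝ᵥ Λ *ᵥ x := by
  obtain ⟨U, -, hUU', hΛU⟩ := hΛ.isHermitian.exists_orthogonal_diagonalization
  set ev := hΛ.isHermitian.eigenvalues
  refine ⟨Finset.univ.inf' Finset.univ_nonempty ev,
    (Finset.lt_inf'_iff _).mpr fun k _ => hΛ.eigenvalues_pos k, fun x => ?_⟩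
  set y := Uᵀ *ᵥ x
  have hy : ∑ k, y k ^ 2 = ∑ j, x j ^ 2 := by
    have : y ⬝ᵥ y = x ⬝ᵥ x := by
      rw [dotProduct_mulVec, vecMul_transpose, mulVec_mulVec, hUU', one_mulVec]
    simpa [dotProduct, sq] using this
  have hquad : x ⬝ᵥ Λ *ᵥ x = ∑ k, ev k * y k ^ 2 := by
    rw [hΛU, ← mulVec_mulVec, ← mulVec_mulVec, dotProduct_mulVec, ← transpose_transpose U,
      vecMul_transpose, transpose_transpose]
    simp only [dotProduct, mulVec_diagonal, y, sq]
    exact Finset.sum_congr rfl fun k _ => by ring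
  rw [hquad, ← hy, Finset.mul_sum]
  gcongr with k
  exact Finset.inf'_le _ (Finset.mem_univ k)

lemma le_minEig [DecidableEq ι] [Nonempty ι] {Λ : Matrix ι ι ℝ} {c : ℝ}
    (h : ∀ x, c * ∑ j, x j ^ 2 ≤ x ⬝ᵥ Λ *ᵥ x) : c ≤ minEig Λ := by
  obtain ⟨i⟩ := ‹Nonempty ι›
  refine le_csInf ⟨_, Pi.single i 1, eNorm_single i, rfl⟩ ?_
  rintro r ⟨x, hx, rfl⟩
  simpa [← eNorm_sq, hx] using h x

lemma minEig_mul_sum_sq_le {Λ : Matrix ι ι ℝ} {c : ℝ}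
    (h : ∀ x, c * ∑ j, x j ^ 2 ≤ x ⬝ᵥ Λ *ᵥ x) (x : ι → ℝ) :
    minEig Λ * ∑ j, x j ^ 2 ≤ x ⬝ᵥ Λ *ᵥ x := by
  have hbdd : BddBelow {r : ℝ | ∃ x : ι → ℝ, eNorm x = 1 ∧ r = x ⬝ᵥ Λ.mulVec x} := by
    refine ⟨c, ?_⟩
    rintro r ⟨x, hx, rfl⟩
    simpa [← eNorm_sq, hx] using h x
  rcases (eNorm_nonneg x).eq_or_lt with hx | hx
  · have : ∑ j, x j ^ 2 = 0 := by rw [← eNorm_sq, ← hx]; ring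
    rw [this, mul_zero]
    simpa [this] using h x
  have hunit : eNorm ((eNorm x)⁻¹ • x) = 1 := by
    rw [eNorm, ← Real.sqrt_one, Real.sqrt_inj (by positivity) zero_le_one]
    simp only [Pi.smul_apply, smul_eq_mul, mul_pow, ← Finset.mul_sum, ← eNorm_sq, inv_pow]
    exact inv_mul_cancel₀ (by positivity)
  have hle := csInf_le hbdd ⟨_, hunit, rfl⟩
  simp only [mulVec_smul, dotProduct_smul, smul_dotProduct, smul_eq_mul] at hle
  rw [← eNorm_sq]
  calc minEig Λ * eNorm x ^ 2 ≤ (eNorm x)⁻¹ * ((eNorm x)⁻¹ * x ⬝ᵥ Λ *ᵥ x) * eNorm x ^ 2 := by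
        gcongr; exact hle
    _ = x ⬝ᵥ Λ *ᵥ x := by field_simp [hx.ne']

lemma Matrix.PosDef.minEig_pos [DecidableEq ι] [Nonempty ι] {Λ : Matrix ι ι ℝ}
    (hΛ : Λ.PosDef) : 0 < minEig Λ := by
  obtain ⟨c, hc, h⟩ := hΛ.exists_pos_mul_sum_sq_le
  exact hc.trans_le (le_minEig h)

lemma Matrix.PosDef.minEig_mul_sum_sq_le [DecidableEq ι] [Nonempty ι] {Λ : Matrix ι ι ℝ}
    (hΛ : Λ.PosDef) (x : ι → ℝ) : minEig Λ * ∑ j, x j ^ 2 ≤ x ⬝ᵥ Λ *ᵥ x := by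
  obtain ⟨c, -, h⟩ := hΛ.exists_pos_mul_sum_sq_le
  exact _root_.minEig_mul_sum_sq_le h x

lemma eNorm_mulVec_le_opNorm_mul (M : Matrix ι κ ℝ) (x : κ → ℝ) :
    eNorm (M *ᵥ x) ≤ opNorm M * eNorm x := by
  have hfrob : √(∑ i, ∑ j, M i j ^ 2) ∈
      {c : ℝ | 0 ≤ c ∧ ∀ x : κ → ℝ, eNorm (M.mulVec x) ≤ c * eNorm x} := by
    refine ⟨Real.sqrt_nonneg _, fun x => ?_⟩
    rw [eNorm, eNorm, ← Real.sqrt_mul (by positivity), Finset.sum_mul]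
    gcongr with i
    simpa [mulVec, dotProduct] using Finset.sum_mul_sq_le_sq_mul_sq Finset.univ (M i) x
  rcases (eNorm_nonneg x).eq_or_lt with hx | hx
  · simpa [← hx] using hfrob.2 x
  rw [← div_le_iff₀ hx]
  exact le_csInf ⟨_, hfrob⟩ fun c hc => (div_le_iff₀ hx).mpr (hc.2 x)

lemma sum_sq_mulVec_le (M : Matrix ι κ ℝ) (x : κ → ℝ) :
    ∑ i, (M *ᵥ x) i ^ 2 ≤ opNorm M ^ 2 * ∑ j, x j ^ 2 := by
  rw [← eNorm_sq, ← eNorm_sq, ← mul_pow]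
  exact pow_le_pow_left₀ (eNorm_nonneg _) (eNorm_mulVec_le_opNorm_mul M x) 2

end RayleighBounds

lemma sum_sq_convexComb {ι : Type*} [Fintype ι] (u v : ι → ℝ) {a b : ℝ} (hab : a + b = 1) :
    ∑ j, (a • u + b • v) j ^ 2
      = a * ∑ j, u j ^ 2 + b * ∑ j, v j ^ 2 - a * b * ∑ j, (v - u) j ^ 2 := by
  simp only [Finset.mul_sum, ← Finset.sum_add_distrib, ← Finset.sum_sub_distrib]
  refine Finset.sum_congr rfl fun j _ => ?_
  simp only [Pi.add_apply, Pi.smul_apply, Pi.sub_apply, smul_eq_mul]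
  rw [show b = 1 - a by linarith]
  ring

lemma sqnorm2_convexComb {p q : ℕ} (x y : Vec p × Vec q) {a b : ℝ} (hab : a + b = 1) :
    sqnorm2 (a • x + b • y) = a * sqnorm2 x + b * sqnorm2 y - a * b * sqnorm2 (y - x) := by
  simp only [sqnorm2, Prod.fst_add, Prod.snd_add, Prod.smul_fst, Prod.smul_snd, Prod.fst_sub,
    Prod.snd_sub, sum_sq_convexComb _ _ hab]
  ring

namespace LMEData

variable {m p q : ℕ} (D : LMEData m p q)

lemma LML_eq_sum_fRM (β : Vec p) (Γ : Matrix (Fin q) (Fin q) ℝ) :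
    D.LML β Γ = ∑ i, fRM (D.y i - D.X i *ᵥ β) (D.Omega Γ i) := by
  simp only [LML, fRM, mul_add]

lemma residual_convexComb (i : Fin m) (β₁ β₂ : Vec p) {a b : ℝ} (hab : a + b = 1) :
    D.y i - D.X i *ᵥ (a • β₁ + b • β₂)
      = a • (D.y i - D.X i *ᵥ β₁) + b • (D.y i - D.X i *ᵥ β₂) := by
  have hy : D.y i = a • D.y i + b • D.y i := by rw [← add_smul, hab, one_smul]
  rw [mulVec_add, mulVec_smul, mulVec_smul, smul_sub, smul_sub]
  nth_rewrite 1 [hy]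
  abel

lemma Omega_diagonal_add_smul (i : Fin m) (γ δ : Vec q) (t : ℝ) :
    D.Omega (diagonal (γ + t • δ)) i
      = D.Omega (diagonal γ) i + t • (D.Z i * diagonal δ * (D.Z i)ᵀ) := by
  have hd : diagonal (γ + t • δ) = diagonal γ + t • diagonal δ := by
    rw [← diagonal_smul, diagonal_add]; rfl
  simp only [Omega, hd, Matrix.mul_add, Matrix.add_mul, Matrix.mul_smul, Matrix.smul_mul]
  abel

lemma Omega_diagonal_convexComb (i : Fin m) (γ₁ γ₂ : Vec q) {a b : ℝ} (hab : a + b = 1) :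
    D.Omega (diagonal (a • γ₁ + b • γ₂)) i
      = a • D.Omega (diagonal γ₁) i + b • D.Omega (diagonal γ₂) i := by
  have hl : D.lam i = a • D.lam i + b • D.lam i := by rw [← add_smul, hab, one_smul]
  have hd : diagonal (a • γ₁ + b • γ₂) = a • diagonal γ₁ + b • diagonal γ₂ := by
    rw [← diagonal_smul, ← diagonal_smul, diagonal_add]; rfl
  simp only [Omega, hd, Matrix.mul_add, Matrix.add_mul, Matrix.mul_smul, Matrix.smul_mul,
    smul_add]
  nth_rewrite 1 [hl]
  abel

lemma Omega_diagonal_sub (i : Fin m) (γ₁ γ₂ : Vec q) :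
    D.Omega (diagonal γ₂) i - D.Omega (diagonal γ₁) i
      = D.Z i * diagonal (γ₂ - γ₁) * (D.Z i)ᵀ := by
  rw [sub_eq_iff_eq_add', ← one_smul ℝ (D.Z i * _ * _), ← D.Omega_diagonal_add_smul, one_smul,
    add_sub_cancel]

lemma posSemidef_Z_mul_diagonal_mul (i : Fin m) {γ : Vec q} (hγ : ∀ j, 0 ≤ γ j) :
    (D.Z i * diagonal γ * (D.Z i)ᵀ).PosSemidef := by
  simpa [conjTranspose_eq_transpose_of_trivial] using
    (posSemidef_diagonal_iff.mpr hγ).mul_mul_conjTranspose_same (D.Z i)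

lemma posDef_Omega (i : Fin m) (hlam : (D.lam i).PosDef) {γ : Vec q} (hγ : ∀ j, 0 ≤ γ j) :
    (D.Omega (diagonal γ) i).PosDef :=
  PosDef.posSemidef_add (D.posSemidef_Z_mul_diagonal_mul i hγ) hlam

lemma minEig_mul_sum_sq_le_Omega (i : Fin m) (hn : 0 < D.n i) (hlam : (D.lam i).PosDef)
    {γ : Vec q} (hγ : ∀ j, 0 ≤ γ j) (v : Fin (D.n i) → ℝ) :
    minEig (D.lam i) * ∑ j, v j ^ 2 ≤ v ⬝ᵥ D.Omega (diagonal γ) i *ᵥ v := by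
  have : Nonempty (Fin (D.n i)) := ⟨⟨0, hn⟩⟩
  have h := (D.posSemidef_Z_mul_diagonal_mul i hγ).dotProduct_mulVec_nonneg v
  rw [star_trivial] at h
  rw [Omega, add_mulVec, dotProduct_add]
  linarith [hlam.minEig_mul_sum_sq_le v]

lemma sq_opNorm_div_minEig_sq_le (i : Fin m) :
    (opNorm (D.Z i) ^ 2 / minEig (D.lam i)) ^ 2 ≤ 2 * D.nu := by
  have h : (1 : ℝ) / 2 * (minEig (D.lam i) ^ 2)⁻¹ * opNorm (D.Z i) ^ 4 ≤ D.nu :=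
    le_ciSup (f := fun i => (1 : ℝ) / 2 * (minEig (D.lam i) ^ 2)⁻¹ * opNorm (D.Z i) ^ 4)
      (Set.finite_range _).bddAbove i
  calc (opNorm (D.Z i) ^ 2 / minEig (D.lam i)) ^ 2
      = 2 * ((1 : ℝ) / 2 * (minEig (D.lam i) ^ 2)⁻¹ * opNorm (D.Z i) ^ 4) := by ring
    _ ≤ 2 * D.nu := by linarith

lemma etabar_nonneg : 0 ≤ D.etabar :=
  mul_nonneg (Real.iSup_nonneg fun i => by positivity) m.cast_nonneg

lemma fRM_Omega_convexComb_le (i : Fin m) (hn : 0 < D.n i) (hlam : (D.lam i).PosDef)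
    (β₁ β₂ : Vec p) {γ₁ γ₂ : Vec q} (hγ₁ : ∀ j, 0 ≤ γ₁ j) (hγ₂ : ∀ j, 0 ≤ γ₂ j)
    {a b : ℝ} (ha : 0 ≤ a) (hb : 0 ≤ b) (hab : a + b = 1) :
    fRM (D.y i - D.X i *ᵥ (a • β₁ + b • β₂)) (D.Omega (diagonal (a • γ₁ + b • γ₂)) i)
      ≤ a * fRM (D.y i - D.X i *ᵥ β₁) (D.Omega (diagonal γ₁) i)
        + b * fRM (D.y i - D.X i *ᵥ β₂) (D.Omega (diagonal γ₂) i)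
        + D.nu / 2 * (a * b) * ∑ j, (γ₂ - γ₁) j ^ 2 := by
  have : Nonempty (Fin (D.n i)) := ⟨⟨0, hn⟩⟩
  have hseg : ∀ t : ℝ, D.Omega (diagonal γ₁) i
      + t • (D.Omega (diagonal γ₂) i - D.Omega (diagonal γ₁) i)
      = D.Omega (diagonal (γ₁ + t • (γ₂ - γ₁))) i := fun t => by
    rw [D.Omega_diagonal_sub, D.Omega_diagonal_add_smul]
  have hseg_nonneg : ∀ t ∈ Icc (0 : ℝ) 1, ∀ j, 0 ≤ (γ₁ + t • (γ₂ - γ₁)) j := by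
    rintro t ⟨ht₀, ht₁⟩ j
    have := hγ₁ j; have := hγ₂ j
    simp only [Pi.add_apply, Pi.smul_apply, Pi.sub_apply, smul_eq_mul]
    nlinarith
  rw [D.residual_convexComb i β₁ β₂ hab, D.Omega_diagonal_convexComb i γ₁ γ₂ hab]
  refine (fRM_convexComb_le
    (K := (opNorm (D.Z i) ^ 2 / minEig (D.lam i)) ^ 2 * ∑ j, (γ₂ - γ₁) j ^ 2)
    (fun t ht => ?_) (fun t ht => ?_) _ _ ha hb hab).trans ?_
  · rw [hseg]
    exact D.posDef_Omega i hlam (hseg_nonneg t ht)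
  · rw [hseg, D.Omega_diagonal_sub]
    exact (D.posDef_Omega i hlam (hseg_nonneg t ht)).trace_sq_inv_mul_le hlam.minEig_pos
      (D.minEig_mul_sum_sq_le_Omega i hn hlam (hseg_nonneg t ht)) (sum_sq_mulVec_le _) _
  · have hcoef := D.sq_opNorm_div_minEig_sq_le i
    have hδ : 0 ≤ a * b * ∑ j, (γ₂ - γ₁) j ^ 2 := by positivity
    nlinarith

lemma L_convexComb_le (hn : ∀ i, 0 < D.n i) (hlam : ∀ i, (D.lam i).PosDef)
    (β₁ β₂ : Vec p) {γ₁ γ₂ : Vec q} (hγ₁ : ∀ j, 0 ≤ γ₁ j) (hγ₂ : ∀ j, 0 ≤ γ₂ j)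
    {a b : ℝ} (ha : 0 ≤ a) (hb : 0 ≤ b) (hab : a + b = 1) :
    D.L (a • β₁ + b • β₂) (a • γ₁ + b • γ₂)
      ≤ a * D.L β₁ γ₁ + b * D.L β₂ γ₂ + D.etabar / 2 * (a * b) * ∑ j, (γ₂ - γ₁) j ^ 2 := by
  have h := Finset.sum_le_sum fun i (_ : i ∈ Finset.univ) =>
    D.fRM_Omega_convexComb_le i (hn i) (hlam i) β₁ β₂ hγ₁ hγ₂ ha hb hab
  simp only [Finset.sum_add_distrib, ← Finset.mul_sum, Finset.sum_const, Finset.card_univ,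
    Fintype.card_fin, nsmul_eq_mul] at h
  simp only [L, LML_eq_sum_fRM, etabar]
  linear_combination h

end LMEData

theorem L_weakly_convex_general
    {m p q : ℕ}
    (D : LMEData m p q) (hn : ∀ i, 0 < D.n i) (hlam : ∀ i, (D.lam i).PosDef) :
    ConvexOn ℝ {x : Vec p × Vec q | ∀ j, 0 ≤ x.2 j}
      (fun x => D.L x.1 x.2 + D.etabar / 2 * sqnorm2 x) := by
  refine ⟨fun x hx y hy a b ha hb hab j =>
    add_nonneg (mul_nonneg ha (hx j)) (mul_nonneg hb (hy j)), fun x hx y hy a b ha hb hab => ?_⟩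
  have hL := D.L_convexComb_le hn hlam x.1 y.1 hx hy ha hb hab
  have hsnd : ∑ j, (y.2 - x.2) j ^ 2 ≤ sqnorm2 (y - x) :=
    le_add_of_nonneg_left (Finset.sum_nonneg fun j _ => sq_nonneg _)
  have hη : 0 ≤ D.etabar / 2 * (a * b) := by have := D.etabar_nonneg; positivity
  simp only [smul_eq_mul, Prod.fst_add, Prod.snd_add, Prod.smul_fst, Prod.smul_snd,
    sqnorm2_convexComb x y hab]
  nlinarith [mul_le_mul_of_nonneg_left hsnd hη]

/-- L is η̄-weakly convex on ℝ^p × ℝ_+^q, i.e.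
(β,γ) ↦ L(β,γ) + (η̄/2)‖(β,γ)‖² is convex there. -/
theorem L_weakly_convex
    {m p q : ℕ} (hm : 0 < m) (hp : 0 < p) (hq : 0 < q)
    (D : LMEData m p q) (hn : ∀ i, 0 < D.n i) (hlam : ∀ i, (D.lam i).PosDef) :
    ConvexOn ℝ {x : Vec p × Vec q | ∀ j, 0 ≤ x.2 j}
      (fun x => D.L x.1 x.2 + D.etabar / 2 * sqnorm2 x) :=
  L_weakly_convex_general D hn hlam
end
end

section
/- Let μ > 0 and let R : ℝ^p × ℝ^q → ℝ ∪ {+∞} be lower semicontinuous and 1-coercive. Then the function (β,γ) ↦ φ_μ(γ) + R(β,γ) is level compact on ℝ^p × ℝ^q. -/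
open Matrix Real Filter Topology Bornology
open scoped Pointwise

noncomputable section

/-!
The barrier `φ_μ` is continuous on the open orthant and blows up at its boundary; since it is
antitone, this makes it lower semicontinuous. Antitonicity also gives
`φ_μ(γ) ≥ -μ q log(‖w‖ / μ)`, which is `o(‖w‖)`, so the linear growth of `R` bounds the sublevel
sets of `φ_μ + R`; being closed, they are compact.
-/

lemma LowerSemicontinuous.ereal_add {α : Type*} [TopologicalSpace α] {f g : α → EReal}
    (hf : LowerSemicontinuous f) (hg : LowerSemicontinuous g) :
    LowerSemicontinuous fun z => f z + g z := by
  -- where a summand is `⊥` so is the sum (`⊤ + ⊥ = ⊥` in `EReal`), and there is nothing to prove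
  intro x y hy
  by_cases hfx : f x = ⊥
  · simp [hfx] at hy
  by_cases hgx : g x = ⊥
  · simp [hgx] at hy
  exact LowerSemicontinuousAt.add' (hf x) (hg x) (EReal.continuousAt_add (.inr hgx) (.inl hfx)) y hy

lemma norm_le_sqrt_sqnorm2 {p q : ℕ} (w : Vec p × Vec q) : ‖w‖ ≤ √(sqnorm2 w) := by
  have h_pi : ∀ {k : ℕ} (v : Vec k), (∑ j, v j ^ 2) ≤ sqnorm2 w → ‖v‖ ≤ √(sqnorm2 w) :=
    fun v hv => (pi_norm_le_iff_of_nonneg (Real.sqrt_nonneg _)).2 fun j =>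
      Real.abs_le_sqrt <| (Finset.single_le_sum (fun k _ => sq_nonneg (v k))
        (Finset.mem_univ j)).trans hv
  have h1 : 0 ≤ ∑ j, w.1 j ^ 2 := by positivity
  have h2 : 0 ≤ ∑ j, w.2 j ^ 2 := by positivity
  exact max_le (h_pi w.1 (by unfold sqnorm2; linarith)) (h_pi w.2 (by unfold sqnorm2; linarith))

lemma tendsto_mul_sub_mul_log_div_atTop {c μ : ℝ} (hc : 0 < c) (hμ : 0 < μ) (K : ℝ) :
    Tendsto (fun s => c * s - K * Real.log (s / μ)) atTop atTop := by
  have h_div : (fun s : ℝ => s / μ) =O[atTop] id :=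
    (Asymptotics.isBigO_const_mul_self μ⁻¹ id atTop).congr_left fun s => inv_mul_eq_div μ s
  have h_o : (fun s => K * Real.log (s / μ)) =o[atTop] id :=
    ((Real.isLittleO_log_id_atTop.comp_tendsto (tendsto_id.atTop_div_const hμ)).trans_isBigO
      h_div).const_mul_left K
  refine tendsto_atTop_mono' atTop ?_ (tendsto_id.const_mul_atTop (half_pos hc))
  filter_upwards [h_o.bound (half_pos hc), eventually_ge_atTop 0] with s hs hs0
  rw [Real.norm_eq_abs, Real.norm_eq_abs, id, abs_of_nonneg hs0] at hs
  show c / 2 * s ≤ _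
  linarith [le_abs_self (K * Real.log (s / μ))]

section phiBar

variable {μ : ℝ} {q : ℕ}

lemma phiBar_of_forall_pos (hμ : 0 < μ) {γ : Vec q} (hγ : ∀ j, 0 < γ j) :
    phiBar μ γ = ((-μ * ∑ j, Real.log (γ j / μ) : ℝ) : EReal) := by
  simp [phiBar, hμ.ne', hμ, hγ]

lemma phiBar_of_not_forall_pos (hμ : 0 < μ) {γ : Vec q} (hγ : ¬ ∀ j, 0 < γ j) :
    phiBar μ γ = ⊤ := by
  simp [phiBar, hμ.ne', hμ, hγ]

lemma phiBar_const (hμ : 0 < μ) {s : ℝ} (hs : 0 < s) :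
    phiBar μ (fun _ : Fin q => s) = ((-(μ * q * Real.log (s / μ)) : ℝ) : EReal) := by
  rw [phiBar_of_forall_pos hμ fun _ => hs]
  simp only [Finset.sum_const, Finset.card_univ, Fintype.card_fin, nsmul_eq_mul]
  ring_nf

lemma antitone_phiBar (hμ : 0 < μ) : Antitone (phiBar μ : Vec q → EReal) := by
  intro γ γ' hle
  by_cases hγ : ∀ j, 0 < γ j
  · have hγ' : ∀ j, 0 < γ' j := fun j => (hγ j).trans_le (hle j)
    rw [phiBar_of_forall_pos hμ hγ, phiBar_of_forall_pos hμ hγ', EReal.coe_le_coe_iff]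
    have hsum : ∑ j, Real.log (γ j / μ) ≤ ∑ j, Real.log (γ' j / μ) :=
      Finset.sum_le_sum fun j _ =>
        Real.log_le_log (div_pos (hγ j) hμ) (div_le_div_of_nonneg_right (hle j) hμ.le)
    exact mul_le_mul_of_nonpos_left hsum (by linarith)
  · rw [phiBar_of_not_forall_pos hμ hγ]
    exact le_top

lemma continuousAt_phiBar (hμ : 0 < μ) {γ : Vec q} (hγ : ∀ j, 0 < γ j) :
    ContinuousAt (phiBar μ) γ := by
  have h_pos : ∀ᶠ γ' in 𝓝 γ, ∀ j, 0 < γ' j := eventually_all.2 fun j =>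
    continuousAt_const.eventually_lt (continuous_apply j).continuousAt (hγ j)
  refine ContinuousAt.congr ?_ (h_pos.mono fun γ' hγ' => (phiBar_of_forall_pos hμ hγ').symm)
  refine continuous_coe_real_ereal.continuousAt.comp (continuousAt_const.mul ?_)
  refine tendsto_finsetSum _ fun j _ => ContinuousAt.log ?_ (div_pos (hγ j) hμ).ne'
  exact (show Continuous fun γ' : Vec q => γ' j / μ by fun_prop).continuousAt

lemma tendsto_phiBar_update_nhdsGT_zero (hμ : 0 < μ) {v : Vec q} (hv : ∀ k, 0 < v k) (j : Fin q) :
    Tendsto (fun t => phiBar μ (Function.update v j t)) (𝓝[>] 0) (𝓝 ⊤) := by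
  classical
  set C := ∑ k ∈ Finset.univ.erase j, Real.log (v k / μ)
  have h_eq : ∀ᶠ t in 𝓝[>] (0 : ℝ),
      ((-μ * (Real.log (t / μ) + C) : ℝ) : EReal) = phiBar μ (Function.update v j t) := by
    filter_upwards [self_mem_nhdsWithin] with t ht
    have h_upd : ∀ k, 0 < Function.update v j t k := by
      intro k
      rcases eq_or_ne k j with rfl | hk
      · simpa using ht
      · simpa [hk] using hv k
    rw [phiBar_of_forall_pos hμ h_upd,
      ← Finset.add_sum_erase _ _ (Finset.mem_univ j), Function.update_self]
    congr 4
    exact Finset.sum_congr rfl fun k hk => by rw [Function.update_of_ne (Finset.ne_of_mem_erase hk)]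
  refine (EReal.tendsto_coe_nhds_top_iff.2 ?_).congr' h_eq
  have h_log : Tendsto (fun t => Real.log (t / μ)) (𝓝[>] 0) atBot := by
    refine Real.tendsto_log_nhdsGT_zero.comp (tendsto_nhdsWithin_iff.2 ⟨?_, ?_⟩)
    · exact ((continuous_id.div_const μ).tendsto' 0 0 (zero_div μ)).mono_left nhdsWithin_le_nhds
    · exact eventually_nhdsWithin_of_forall fun t ht => div_pos ht hμ
  exact (tendsto_atBot_add_const_right _ C h_log).const_mul_atBot_of_neg (by linarith)

theorem lowerSemicontinuous_phiBar (hμ : 0 < μ) :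
    LowerSemicontinuous (phiBar μ : Vec q → EReal) := by
  intro γ
  by_cases hγ : ∀ j, 0 < γ j
  · exact (continuousAt_phiBar hμ hγ).lowerSemicontinuousAt
  obtain ⟨j, hj⟩ := not_forall.1 hγ
  intro y hy
  set v : Vec q := fun k => |γ k| + 1
  have hv : ∀ k, 0 < v k := fun k => by positivity
  obtain ⟨t, hyt, ht⟩ := ((tendsto_phiBar_update_nhdsGT_zero hμ hv j).eventually
    (lt_mem_nhds (hy.trans_le le_top))).and self_mem_nhdsWithin |>.exists
  have h_near : ∀ᶠ γ' in 𝓝 γ, ∀ k, γ' k < Function.update v j t k := eventually_all.2 fun k => by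
    refine (continuous_apply k).continuousAt.eventually_lt continuousAt_const ?_
    rcases eq_or_ne k j with rfl | hk
    · simpa using (not_lt.1 hj).trans_lt ht
    · simpa [hk, v] using (le_abs_self (γ k)).trans_lt (lt_add_one _)
  filter_upwards [h_near] with γ' hγ'
  exact hyt.trans_le (antitone_phiBar hμ fun k => (hγ' k).le)

end phiBar

lemma isBounded_setOf_phiBar_add_le {p q : ℕ} {μ : ℝ} (hμ : 0 < μ) {R : Vec p × Vec q → EReal}
    (hR : OneCoercive R) (c : ℝ) :
    IsBounded {w : Vec p × Vec q | phiBar μ w.2 + R w ≤ c} := by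
  obtain ⟨c₀, hc₀, r, hr⟩ := hR
  obtain ⟨S, hS⟩ := eventually_atTop.1
    ((tendsto_mul_sub_mul_log_div_atTop hc₀ hμ (μ * q)).eventually_gt_atTop c |>.and
      (eventually_gt_atTop 0))
  refine (Metric.isBounded_iff_subset_closedBall 0).2 ⟨max r S, fun w hw => ?_⟩
  rw [Metric.mem_closedBall, dist_zero_right]
  have hw' : phiBar μ w.2 + R w ≤ c := hw
  refine (norm_le_sqrt_sqnorm2 w).trans (not_lt.1 fun h_large => hw'.not_gt ?_)
  set s := √(sqnorm2 w)
  obtain ⟨hs_gt, hs_pos⟩ := hS s (le_max_right r S |>.trans h_large.le)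
  have h_phi : ((-(μ * q * Real.log (s / μ)) : ℝ) : EReal) ≤ phiBar μ w.2 := by
    rw [← phiBar_const hμ hs_pos]
    refine antitone_phiBar hμ fun j => (le_abs_self _).trans ?_
    exact (norm_le_pi_norm w.2 j).trans ((norm_snd_le w).trans (norm_le_sqrt_sqnorm2 w))
  calc (c : EReal) < ((-(μ * q * Real.log (s / μ)) + c₀ * s : ℝ) : EReal) := by
        exact_mod_cast (by linarith : c < -(μ * q * Real.log (s / μ)) + c₀ * s)
    _ ≤ phiBar μ w.2 + R w := by
        rw [EReal.coe_add]
        exact add_le_add h_phi (hr w (le_max_left r S |>.trans h_large.le))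

theorem logbarrier_plus_coercive_level_compact_general
    {p q : ℕ} (μ : ℝ) (hμ : 0 < μ)
    (R : Vec p × Vec q → EReal)
    (hRlsc : LowerSemicontinuous R) (hRco : OneCoercive R) :
    ∀ c : ℝ, IsCompact {w : Vec p × Vec q | phiBar μ w.2 + R w ≤ (c : EReal)} := fun c =>
  Metric.isCompact_of_isClosed_isBounded
    ((((lowerSemicontinuous_phiBar hμ).comp continuous_snd).ereal_add hRlsc).isClosed_preimage c)
    (isBounded_setOf_phiBar_add_le hμ hRco c)

/-- For μ > 0 and R lsc and 1-coercive, φ_μ + R is level compact. -/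
theorem logbarrier_plus_coercive_level_compact
    {p q : ℕ} (hp : 0 < p) (hq : 0 < q) (μ : ℝ) (hμ : 0 < μ)
    (R : Vec p × Vec q → EReal) (hRbot : ∀ w, R w ≠ ⊥)
    (hRlsc : LowerSemicontinuous R) (hRco : OneCoercive R) :
    ∀ c : ℝ, IsCompact {w : Vec p × Vec q | phiBar μ w.2 + R w ≤ (c : EReal)} :=
  logbarrier_plus_coercive_level_compact_general μ hμ R hRlsc hRco
end
end
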